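/- arXiv:2104.01786 — 3 statements merged into one kernel-verified Lean document; each statement's English description precedes it below -/
import Mathlib

section
/- For a unit imaginary octonion u, the right-multiplication complex structure R_u equals L_u ∘ ρ = ρ ∘ L_u, where ρ is the orthogonal reflection fixing span(1,u) and negating its orthogonal complement in 𝕆; moreover ρ² = id and ρ commutes with L_u. -/
set_option maxHeartbeats 4000000

open Matrix BigOperators

noncomputable section

def octIdx : Fin 8 → Fin 8 → Fin 8 :=
  ![![0, 1, 2, 3, 4, 5, 6, 7],
    ![1, 0, 7, 6, 5, 4, 3, 2],
    ![2, 7, 0, 5, 6, 3, 4, 1],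
    ![3, 6, 5, 0, 7, 2, 1, 4],
    ![4, 5, 6, 7, 0, 1, 2, 3],
    ![5, 4, 3, 2, 1, 0, 7, 6],
    ![6, 3, 4, 1, 2, 7, 0, 5],
    ![7, 2, 1, 4, 3, 6, 5, 0]]

def octSgn : Fin 8 → Fin 8 → ℝ :=
  ![![1, 1, 1, 1, 1, 1, 1, 1],
    ![1, -1, -1, 1, -1, 1, -1, 1],
    ![1, 1, -1, -1, -1, 1, 1, -1],
    ![1, -1, 1, -1, -1, -1, 1, 1],
    ![1, 1, 1, 1, -1, -1, -1, -1],
    ![1, -1, -1, 1, 1, -1, 1, -1],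
    ![1, 1, -1, -1, 1, -1, -1, 1],
    ![1, -1, 1, -1, 1, 1, -1, -1]]

/-- Left multiplication by the octonion `x` as an 8×8 real matrix. -/
def Lo (x : Fin 8 → ℝ) : Matrix (Fin 8) (Fin 8) ℝ :=
  Matrix.of fun r c => ∑ i, if r = octIdx i c then octSgn i c * x i else 0

/-- The imaginary unit octonion `e^(i+1)` as a vector. -/
def eo (i : Fin 7) : Fin 8 → ℝ := Pi.single i.succ 1

/-- The Clifford generator `E^(i+1) = L_{e^(i+1)}`. -/
def Eo (i : Fin 7) : Matrix (Fin 8) (Fin 8) ℝ := Lo (eo i)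

/-- Right multiplication by the octonion `x` as an 8×8 real matrix. -/
def Ro (x : Fin 8 → ℝ) : Matrix (Fin 8) (Fin 8) ℝ :=
  Matrix.of fun r c => ∑ j, if r = octIdx c j then octSgn c j * x j else 0

/-- The orthogonal reflection fixing span(1,u) and negating its orthogonal complement. -/
def rhoM (u : Fin 8 → ℝ) : Matrix (Fin 8) (Fin 8) ℝ :=
  -1 + (2 : ℝ) • Matrix.vecMulVec (Pi.single 0 1) (Pi.single 0 1)
    + (2 : ℝ) • Matrix.vecMulVec u u

section Aux
variable {α : Type*} (a0 a1 a2 a3 a4 a5 a6 a7 : α)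
lemma vv0 : ![a0,a1,a2,a3,a4,a5,a6,a7] (0:Fin 8) = a0 := rfl
lemma vv1 : ![a0,a1,a2,a3,a4,a5,a6,a7] (1:Fin 8) = a1 := rfl
lemma vv2 : ![a0,a1,a2,a3,a4,a5,a6,a7] (2:Fin 8) = a2 := rfl
lemma vv3 : ![a0,a1,a2,a3,a4,a5,a6,a7] (3:Fin 8) = a3 := rfl
lemma vv4 : ![a0,a1,a2,a3,a4,a5,a6,a7] (4:Fin 8) = a4 := rfl
lemma vv5 : ![a0,a1,a2,a3,a4,a5,a6,a7] (5:Fin 8) = a5 := rfl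
lemma vv6 : ![a0,a1,a2,a3,a4,a5,a6,a7] (6:Fin 8) = a6 := rfl
lemma vv7 : ![a0,a1,a2,a3,a4,a5,a6,a7] (7:Fin 8) = a7 := rfl
lemma fm0 (h : 0 < 8) : (⟨0,h⟩ : Fin 8) = 0 := rfl
lemma fm1 (h : 1 < 8) : (⟨1,h⟩ : Fin 8) = 1 := rfl
lemma fm2 (h : 2 < 8) : (⟨2,h⟩ : Fin 8) = 2 := rfl
lemma fm3 (h : 3 < 8) : (⟨3,h⟩ : Fin 8) = 3 := rfl
lemma fm4 (h : 4 < 8) : (⟨4,h⟩ : Fin 8) = 4 := rfl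
lemma fm5 (h : 5 < 8) : (⟨5,h⟩ : Fin 8) = 5 := rfl
lemma fm6 (h : 6 < 8) : (⟨6,h⟩ : Fin 8) = 6 := rfl
lemma fm7 (h : 7 < 8) : (⟨7,h⟩ : Fin 8) = 7 := rfl
end Aux

lemma Ro_eq_Lo_mul_rhoM (u : Fin 8 → ℝ) (hu0 : u 0 = 0)
    (hu1 : ∑ k, u k ^ 2 = 1) : Ro u = Lo u * rhoM u := by
  have hS : u 1^2 + u 2^2 + u 3^2 + u 4^2 + u 5^2 + u 6^2 + u 7^2 = 1 := by
    rw [Fin.sum_univ_eight, hu0] at hu1; linarith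
  have h1 : ∀ j : Fin 8, (u 1^2 + u 2^2 + u 3^2 + u 4^2 + u 5^2 + u 6^2 + u 7^2) * u j = u j :=
    fun j => by rw [hS, one_mul]
  ext r c
  fin_cases r <;> fin_cases c <;>
    simp only [Ro, Lo, rhoM, Matrix.mul_apply, Matrix.of_apply, Fin.sum_univ_eight,
      Matrix.add_apply, Matrix.neg_apply, Matrix.one_apply, Matrix.smul_apply,
      Matrix.vecMulVec_apply, octIdx, octSgn, fm0,fm1,fm2,fm3,fm4,fm5,fm6,fm7,
      vv0,vv1,vv2,vv3,vv4,vv5,vv6,vv7, smul_eq_mul] <;>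
    simp (config := { decide := true }) only [Pi.single_apply, hu0, if_true, if_false,
      reduceIte, vv0,vv1,vv2,vv3,vv4,vv5,vv6,vv7] <;>
    ring_nf <;>
    first
      | rfl
      | linarith [h1 1, h1 2, h1 3, h1 4, h1 5, h1 6, h1 7]

lemma Ro_eq_rhoM_mul_Lo (u : Fin 8 → ℝ) (hu0 : u 0 = 0)
    (hu1 : ∑ k, u k ^ 2 = 1) : Ro u = rhoM u * Lo u := by
  have hS : u 1^2 + u 2^2 + u 3^2 + u 4^2 + u 5^2 + u 6^2 + u 7^2 = 1 := by
    rw [Fin.sum_univ_eight, hu0] at hu1; linarith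
  have h1 : ∀ j : Fin 8, (u 1^2 + u 2^2 + u 3^2 + u 4^2 + u 5^2 + u 6^2 + u 7^2) * u j = u j :=
    fun j => by rw [hS, one_mul]
  ext r c
  fin_cases r <;> fin_cases c <;>
    simp only [Ro, Lo, rhoM, Matrix.mul_apply, Matrix.of_apply, Fin.sum_univ_eight,
      Matrix.add_apply, Matrix.neg_apply, Matrix.one_apply, Matrix.smul_apply,
      Matrix.vecMulVec_apply, octIdx, octSgn, fm0,fm1,fm2,fm3,fm4,fm5,fm6,fm7,
      vv0,vv1,vv2,vv3,vv4,vv5,vv6,vv7, smul_eq_mul] <;>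
    simp (config := { decide := true }) only [Pi.single_apply, hu0, if_true, if_false,
      reduceIte, vv0,vv1,vv2,vv3,vv4,vv5,vv6,vv7] <;>
    ring_nf <;>
    first
      | rfl
      | linarith [h1 1, h1 2, h1 3, h1 4, h1 5, h1 6, h1 7]

lemma vmv_mul (a b c d : Fin 8 → ℝ) :
    Matrix.vecMulVec a b * Matrix.vecMulVec c d = (b ⬝ᵥ c) • Matrix.vecMulVec a d := by
  ext r s
  simp only [Matrix.mul_apply, Matrix.vecMulVec_apply, Matrix.smul_apply, dotProduct,
    smul_eq_mul, Finset.sum_mul]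
  exact Finset.sum_congr rfl fun k _ => by ring

lemma rho_sq (u : Fin 8 → ℝ) (hu0 : u 0 = 0) (hu1 : ∑ k, u k ^ 2 = 1) :
    rhoM u * rhoM u = 1 := by
  set p : Fin 8 → ℝ := Pi.single 0 1 with hp
  have hpp : p ⬝ᵥ p = 1 := by simp [hp, dotProduct, Pi.single_apply]
  have hpu : p ⬝ᵥ u = 0 := by simp [hp, dotProduct, Pi.single_apply, hu0]
  have hup : u ⬝ᵥ p = 0 := by simp [hp, dotProduct, Pi.single_apply, hu0]
  have huu : u ⬝ᵥ u = 1 := by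
    simpa [dotProduct, pow_two] using hu1
  rw [rhoM]
  simp only [add_mul, mul_add, neg_one_mul, mul_neg_one, neg_add, neg_neg,
    Matrix.smul_mul, Matrix.mul_smul, vmv_mul, hpp, hpu, hup, huu, one_smul, zero_smul,
    smul_zero, smul_smul]
  have hpp' : (Pi.single 0 1 : Fin 8 → ℝ) ⬝ᵥ Pi.single 0 1 = 1 := by
    simp [dotProduct, Pi.single_apply]
  have hup' : u ⬝ᵥ (Pi.single 0 1 : Fin 8 → ℝ) = 0 := by
    simp [dotProduct, Pi.single_apply, hu0]
  have hpu' : (Pi.single 0 1 : Fin 8 → ℝ) ⬝ᵥ u = 0 := by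
    simp [dotProduct, Pi.single_apply, hu0]
  simp only [hpp', hup', hpu', one_smul, zero_smul, smul_zero]
  module


/-- for a unit imaginary octonion `u`, `R_u = L_u ∘ ρ = ρ ∘ L_u`,
`ρ² = id`, and `ρ` commutes with `L_u`. -/
theorem right_mul_eq_left_mul_reflection (u : Fin 8 → ℝ) (hu0 : u 0 = 0)
    (hu1 : ∑ k, u k ^ 2 = 1) :
    Ro u = Lo u * rhoM u ∧ Ro u = rhoM u * Lo u ∧
    rhoM u * rhoM u = 1 ∧ rhoM u * Lo u = Lo u * rhoM u := by
  refine ⟨Ro_eq_Lo_mul_rhoM u hu0 hu1, Ro_eq_rhoM_mul_Lo u hu0 hu1, rho_sq u hu0 hu1, ?_⟩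
  rw [← Ro_eq_rhoM_mul_Lo u hu0 hu1, Ro_eq_Lo_mul_rhoM u hu0 hu1]
end
end

section
/- With Ψ ∈ 𝕆⊗𝕆̃ and Ψ' ∈ 𝕆⊗𝕆̃ transforming under X = Σ w_{ij}E^iE^j⊗I + I⊗Σ w̃_{ij}Ẽ^iẼ^j + Σ a_{ij}E^i⊗Ẽ^j and X' = Σ w_{ij}E^iE^j⊗I + I⊗Σ w̃_{ij}Ẽ^iẼ^j - Σ a_{ij}E^i⊗Ẽ^j respectively, the pairing ⟨⟨Ψ',Ψ⟩⟩ obtained by composing the Euclidean pairing on 𝕆 with the split pairing -y₁^T τ y₂ on 𝕆̃ is invariant: ⟨⟨X'Ψ',Ψ⟩⟩ + ⟨⟨Ψ',XΨ⟩⟩ = 0 for all coefficients w, w̃, a. -/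
open Matrix BigOperators

noncomputable section

def sIdx : Fin 8 → Fin 8 → Fin 8 :=
  ![![0, 1, 2, 3, 4, 5, 6, 7],
    ![1, 0, 7, 6, 5, 4, 3, 2],
    ![2, 7, 0, 5, 6, 3, 4, 1],
    ![3, 6, 5, 0, 7, 2, 1, 4],
    ![4, 5, 6, 7, 0, 1, 2, 3],
    ![5, 4, 3, 2, 1, 0, 7, 6],
    ![6, 3, 4, 1, 2, 7, 0, 5],
    ![7, 2, 1, 4, 3, 6, 5, 0]]

def sSgn : Fin 8 → Fin 8 → ℝ :=
  ![![1, 1, 1, 1, 1, 1, 1, 1],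
    ![1, 1, 1, -1, 1, 1, -1, 1],
    ![1, -1, 1, 1, 1, 1, 1, -1],
    ![1, 1, -1, 1, 1, -1, 1, 1],
    ![1, -1, -1, -1, 1, -1, -1, -1],
    ![1, -1, -1, 1, 1, -1, 1, -1],
    ![1, 1, -1, -1, 1, -1, -1, 1],
    ![1, -1, 1, -1, 1, 1, -1, -1]]

/-- Left multiplication by the split octonion `y` as an 8×8 real matrix. -/
def Lt (y : Fin 8 → ℝ) : Matrix (Fin 8) (Fin 8) ℝ :=
  Matrix.of fun r c => ∑ i, if r = sIdx i c then sSgn i c * y i else 0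

/-- The imaginary split octonion unit `ẽ^(i+1)` as a vector. -/
def et (i : Fin 7) : Fin 8 → ℝ := Pi.single i.succ 1

/-- The Clifford generator `Ẽ^(i+1) = L_{ẽ^(i+1)}`. -/
def Et (i : Fin 7) : Matrix (Fin 8) (Fin 8) ℝ := Lt (et i)

/-- The general element `X = Σ_{i<j} w_{ij} E^i E^j` of the Lie algebra so(7) acting on 𝕆. -/
def Xw (w : Fin 7 → Fin 7 → ℝ) : Matrix (Fin 8) (Fin 8) ℝ :=
  ∑ i, ∑ j, if i < j then w i j • (Eo i * Eo j) else 0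

/-- The general element `X = Σ_{i<j} w̃_{ij} Ẽ^i Ẽ^j` of the Lie algebra so(4,3) acting on 𝕆̃. -/
def Xtw (w : Fin 7 → Fin 7 → ℝ) : Matrix (Fin 8) (Fin 8) ℝ :=
  ∑ i, ∑ j, if i < j then w i j • (Et i * Et j) else 0

/-- The matrix τ = diag(-1,1,1,1,1,-1,-1,-1) of the split pairing. -/
def tauD : Matrix (Fin 8) (Fin 8) ℝ := Matrix.diagonal ![(-1 : ℝ), 1, 1, 1, 1, -1, -1, -1]

/-- The invariant pairing on `𝕆 ⊗ 𝕆̃ ≅` (8×8 matrices):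
`⟨⟨x₁⊗y₁, x₂⊗y₂⟩⟩ = (x₁ᵀx₂)(-y₁ᵀ τ y₂)`. -/
def pairOT (P Q : Matrix (Fin 8) (Fin 8) ℝ) : ℝ := -(Pᵀ * Q * tauD).trace

/-- The action of the so(11,3) Lie algebra element with parameters `(w, w̃, a)` and
relative sign `s` of the mixed term on `Ψ ∈ 𝕆 ⊗ 𝕆̃` (matrix model: `A⊗B : Ψ ↦ AΨBᵀ`). -/
def actS (w wt : Fin 7 → Fin 7 → ℝ) (a : Fin 7 → Fin 7 → ℝ) (s : ℝ)
    (Ψ : Matrix (Fin 8) (Fin 8) ℝ) : Matrix (Fin 8) (Fin 8) ℝ :=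
  Xw w * Ψ + Ψ * (Xtw wt)ᵀ + s • ∑ i, ∑ j, a i j • (Eo i * Ψ * (Et j)ᵀ)

/-! ### Auxiliary integer-level machinery -/

def octSgnZ : Fin 8 → Fin 8 → ℤ :=
  ![![1, 1, 1, 1, 1, 1, 1, 1],
    ![1, -1, -1, 1, -1, 1, -1, 1],
    ![1, 1, -1, -1, -1, 1, 1, -1],
    ![1, -1, 1, -1, -1, -1, 1, 1],
    ![1, 1, 1, 1, -1, -1, -1, -1],
    ![1, -1, -1, 1, 1, -1, 1, -1],
    ![1, 1, -1, -1, 1, -1, -1, 1],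
    ![1, -1, 1, -1, 1, 1, -1, -1]]

def sSgnZ : Fin 8 → Fin 8 → ℤ :=
  ![![1, 1, 1, 1, 1, 1, 1, 1],
    ![1, 1, 1, -1, 1, 1, -1, 1],
    ![1, -1, 1, 1, 1, 1, 1, -1],
    ![1, 1, -1, 1, 1, -1, 1, 1],
    ![1, -1, -1, -1, 1, -1, -1, -1],
    ![1, -1, -1, 1, 1, -1, 1, -1],
    ![1, 1, -1, -1, 1, -1, -1, 1],
    ![1, -1, 1, -1, 1, 1, -1, -1]]

def EoZ (i : Fin 7) : Matrix (Fin 8) (Fin 8) ℤ :=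
  Matrix.of fun r c => if r = octIdx i.succ c then octSgnZ i.succ c else 0

def EtZ (i : Fin 7) : Matrix (Fin 8) (Fin 8) ℤ :=
  Matrix.of fun r c => if r = sIdx i.succ c then sSgnZ i.succ c else 0

def tauZ : Matrix (Fin 8) (Fin 8) ℤ := Matrix.diagonal ![(-1 : ℤ), 1, 1, 1, 1, -1, -1, -1]

lemma EoZ_t : ∀ i : Fin 7, (EoZ i)ᵀ = -(EoZ i) := by decide
lemma EoZ_anti : ∀ i j : Fin 7, i ≠ j → EoZ i * EoZ j = -(EoZ j * EoZ i) := by decide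
lemma EtZ_tau : ∀ i : Fin 7, (EtZ i)ᵀ * tauZ = -(tauZ * EtZ i) := by decide
lemma EtZ_anti : ∀ i j : Fin 7, i ≠ j → EtZ i * EtZ j = -(EtZ j * EtZ i) := by decide

/-! ### Transfer from ℤ to ℝ -/

abbrev castR : ℤ →+* ℝ := Int.castRingHom ℝ

lemma octSgn_cast (a b : Fin 8) : octSgn a b = castR (octSgnZ a b) := by
  fin_cases a <;> fin_cases b <;> norm_num [octSgn, octSgnZ, castR]

lemma sSgn_cast (a b : Fin 8) : sSgn a b = castR (sSgnZ a b) := by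
  fin_cases a <;> fin_cases b <;> norm_num [sSgn, sSgnZ, castR]

lemma L_single (Idx : Fin 8 → Fin 8 → Fin 8) (Sgn : Fin 8 → Fin 8 → ℝ) (k r c : Fin 8) :
    (∑ i, if r = Idx i c then Sgn i c * (Pi.single k 1 : Fin 8 → ℝ) i else 0)
      = if r = Idx k c then Sgn k c else 0 := by
  rw [Finset.sum_eq_single k]
  · simp
  · intro b _ hb
    simp [Pi.single_apply, hb]
  · simp

lemma Eo_eq (i : Fin 7) : Eo i = (EoZ i).map castR := by
  ext r c
  simp only [Eo, Lo, eo, Matrix.of_apply, EoZ, Matrix.map_apply]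
  rw [L_single, octSgn_cast, apply_ite (castR : ℤ → ℝ)]
  simp

lemma Et_eq (i : Fin 7) : Et i = (EtZ i).map castR := by
  ext r c
  simp only [Et, Lt, et, Matrix.of_apply, EtZ, Matrix.map_apply]
  rw [L_single, sSgn_cast, apply_ite (castR : ℤ → ℝ)]
  simp

lemma tau_eq : tauD = tauZ.map castR := by
  ext r c
  by_cases h : r = c
  · subst h
    simp only [tauD, tauZ, Matrix.map_apply, Matrix.diagonal_apply_eq]
    fin_cases r <;> norm_num
  · simp [tauD, tauZ, Matrix.diagonal_apply_ne _ h]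

lemma map_negR (M : Matrix (Fin 8) (Fin 8) ℤ) : (-M).map castR = -(M.map castR) := by
  ext r c
  simp

lemma Eo_t (i : Fin 7) : (Eo i)ᵀ = -Eo i := by
  rw [Eo_eq, ← Matrix.transpose_map, EoZ_t, map_negR]

lemma Eo_anti (i j : Fin 7) (h : i ≠ j) : Eo i * Eo j = -(Eo j * Eo i) := by
  rw [Eo_eq, Eo_eq, ← Matrix.map_mul, ← Matrix.map_mul, EoZ_anti i j h, map_negR]

lemma Et_tau (i : Fin 7) : (Et i)ᵀ * tauD = -(tauD * Et i) := by
  rw [Et_eq, tau_eq, ← Matrix.transpose_map, ← Matrix.map_mul, ← Matrix.map_mul,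
    EtZ_tau, map_negR]

lemma Et_anti (i j : Fin 7) (h : i ≠ j) : Et i * Et j = -(Et j * Et i) := by
  rw [Et_eq, Et_eq, ← Matrix.map_mul, ← Matrix.map_mul, EtZ_anti i j h, map_negR]

/-! ### Structural lemmas for the Lie algebra elements -/

lemma Xw_t (w : Fin 7 → Fin 7 → ℝ) : (Xw w)ᵀ = -Xw w := by
  unfold Xw
  rw [Matrix.transpose_sum]
  rw [← Finset.sum_neg_distrib]
  refine Finset.sum_congr rfl fun i _ => ?_
  rw [Matrix.transpose_sum, ← Finset.sum_neg_distrib]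
  refine Finset.sum_congr rfl fun j _ => ?_
  by_cases h : i < j
  · simp only [if_pos h, Matrix.transpose_smul, Matrix.transpose_mul, Eo_t, Matrix.neg_mul,
      Matrix.mul_neg, neg_neg]
    rw [Eo_anti j i h.ne', smul_neg]
  · simp [if_neg h]

lemma EtEt_tau (i j : Fin 7) (h : i ≠ j) :
    (Et i * Et j)ᵀ * tauD = -(tauD * (Et i * Et j)) := by
  rw [Matrix.transpose_mul, Matrix.mul_assoc, Et_tau, Matrix.mul_neg, ← Matrix.mul_assoc,
    Et_tau, Matrix.neg_mul, neg_neg, Matrix.mul_assoc, Et_anti j i h.symm, Matrix.mul_neg]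

lemma Xtw_tau (wt : Fin 7 → Fin 7 → ℝ) : (Xtw wt)ᵀ * tauD = -(tauD * Xtw wt) := by
  unfold Xtw
  rw [Matrix.transpose_sum, Finset.sum_mul, Matrix.mul_sum, ← Finset.sum_neg_distrib]
  refine Finset.sum_congr rfl fun i _ => ?_
  rw [Matrix.transpose_sum, Finset.sum_mul, Matrix.mul_sum, ← Finset.sum_neg_distrib]
  refine Finset.sum_congr rfl fun j _ => ?_
  by_cases h : i < j
  · simp only [if_pos h, Matrix.transpose_smul, Matrix.smul_mul, Matrix.mul_smul]
    rw [EtEt_tau i j h.ne, smul_neg]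
  · simp [if_neg h]

/-! ### Bilinearity and symmetry properties of the pairing -/

lemma pairOT_add_left (P P' Q : Matrix (Fin 8) (Fin 8) ℝ) :
    pairOT (P + P') Q = pairOT P Q + pairOT P' Q := by
  simp only [pairOT, Matrix.transpose_add, Matrix.add_mul, Matrix.trace_add]
  ring

lemma pairOT_add_right (P Q Q' : Matrix (Fin 8) (Fin 8) ℝ) :
    pairOT P (Q + Q') = pairOT P Q + pairOT P Q' := by
  simp only [pairOT, Matrix.mul_add, Matrix.add_mul, Matrix.trace_add]
  ring

lemma pairOT_smul_left (r : ℝ) (P Q : Matrix (Fin 8) (Fin 8) ℝ) :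
    pairOT (r • P) Q = r * pairOT P Q := by
  simp [pairOT, Matrix.transpose_smul, Matrix.smul_mul]

lemma pairOT_smul_right (r : ℝ) (P Q : Matrix (Fin 8) (Fin 8) ℝ) :
    pairOT P (r • Q) = r * pairOT P Q := by
  simp [pairOT, Matrix.mul_smul, Matrix.smul_mul]

lemma pairOT_sum_left {ι : Type*} (s : Finset ι) (f : ι → Matrix (Fin 8) (Fin 8) ℝ)
    (Q : Matrix (Fin 8) (Fin 8) ℝ) :
    pairOT (∑ x ∈ s, f x) Q = ∑ x ∈ s, pairOT (f x) Q := by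
  simp [pairOT, Matrix.transpose_sum, Finset.sum_mul]

lemma pairOT_sum_right {ι : Type*} (s : Finset ι) (f : ι → Matrix (Fin 8) (Fin 8) ℝ)
    (P : Matrix (Fin 8) (Fin 8) ℝ) :
    pairOT P (∑ x ∈ s, f x) = ∑ x ∈ s, pairOT P (f x) := by
  simp [pairOT, Matrix.mul_sum, Finset.sum_mul]

lemma pairOT_left (A : Matrix (Fin 8) (Fin 8) ℝ) (hA : Aᵀ = -A)
    (Ψ' Ψ : Matrix (Fin 8) (Fin 8) ℝ) :
    pairOT (A * Ψ') Ψ = -pairOT Ψ' (A * Ψ) := by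
  simp only [pairOT, Matrix.transpose_mul, hA, Matrix.mul_neg, Matrix.neg_mul,
    Matrix.trace_neg, neg_neg, Matrix.mul_assoc]

lemma pairOT_right (B : Matrix (Fin 8) (Fin 8) ℝ) (hB : Bᵀ * tauD = -(tauD * B))
    (Ψ' Ψ : Matrix (Fin 8) (Fin 8) ℝ) :
    pairOT (Ψ' * Bᵀ) Ψ = -pairOT Ψ' (Ψ * Bᵀ) := by
  have hτ : tauD * B = -(Bᵀ * tauD) := by rw [hB, neg_neg]
  unfold pairOT
  rw [Matrix.transpose_mul, Matrix.transpose_transpose]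
  rw [Matrix.mul_assoc, Matrix.mul_assoc, Matrix.trace_mul_comm B,
    Matrix.mul_assoc Ψ'ᵀ, Matrix.mul_assoc Ψ tauD B, hτ]
  simp [Matrix.mul_neg, Matrix.mul_assoc]

lemma pairOT_conj (A B : Matrix (Fin 8) (Fin 8) ℝ) (hA : Aᵀ = -A)
    (hB : Bᵀ * tauD = -(tauD * B)) (Ψ' Ψ : Matrix (Fin 8) (Fin 8) ℝ) :
    pairOT (A * Ψ' * Bᵀ) Ψ = pairOT Ψ' (A * Ψ * Bᵀ) := by
  rw [Matrix.mul_assoc, pairOT_left A hA, pairOT_right B hB, neg_neg]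

/-! ### Main theorem -/

/-- the pairing `⟨⟨·,·⟩⟩` between the two semi-spinor representations of
so(11,3) is invariant: `⟨⟨X'Ψ', Ψ⟩⟩ + ⟨⟨Ψ', XΨ⟩⟩ = 0`, where `X'` differs from `X` by the
sign of the mixed term `Σ a_{ij} E^i ⊗ Ẽ^j`. -/
theorem semi_spinor_pairing_invariant
    (w wt a : Fin 7 → Fin 7 → ℝ) (Ψ' Ψ : Matrix (Fin 8) (Fin 8) ℝ) :
    pairOT (actS w wt a (-1) Ψ') Ψ + pairOT Ψ' (actS w wt a 1 Ψ) = 0 := by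
  unfold actS
  rw [pairOT_add_left, pairOT_add_left, pairOT_add_right, pairOT_add_right,
    pairOT_smul_left, pairOT_smul_right]
  rw [pairOT_left (Xw w) (Xw_t w), pairOT_right (Xtw wt) (Xtw_tau wt)]
  have hS : pairOT (∑ i, ∑ j, a i j • (Eo i * Ψ' * (Et j)ᵀ)) Ψ
      = pairOT Ψ' (∑ i, ∑ j, a i j • (Eo i * Ψ * (Et j)ᵀ)) := by
    rw [pairOT_sum_left, pairOT_sum_right]
    refine Finset.sum_congr rfl fun i _ => ?_
    rw [pairOT_sum_left, pairOT_sum_right]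
    refine Finset.sum_congr rfl fun j _ => ?_
    rw [pairOT_smul_left, pairOT_smul_right, pairOT_conj (Eo i) (Et j) (Eo_t i) (Et_tau j)]
  rw [hS]
  ring
end
end

section
/- The operator E¹E⁵ + E²E⁶ + E³E⁷ on the octonions, where E^i = L_{e^i}, commutes with the complex structure J = E⁴ and with the right-multiplication complex structure J' = R_{e⁴}; its restriction to the (1,0)-eigenspace of J acts with eigenvalue 3i on the 'lepton' direction span_ℂ(1 - i e⁴) and eigenvalue -i on each 'quark' direction span_ℂ(e^i - i e^{i+4}), i = 1,2,3. Equivalently, ⟨x, (E¹E⁵+E²E⁶+E³E⁷)E⁴ x⟩ = -3 L̄L + Q̄ⁱQⁱ where L = x₀ - i x₄ and Qⁱ = xᵢ - i x_{i+4}. -/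
open Matrix BigOperators

noncomputable section

/-- The operator `E¹E⁵ + E²E⁶ + E³E⁷` (0-based indices). -/
def Kop : Matrix (Fin 8) (Fin 8) ℝ := Eo 0 * Eo 4 + Eo 1 * Eo 5 + Eo 2 * Eo 6

/-- The 'lepton' direction `1 - i e⁴`. -/
def vL : Fin 8 → ℂ := fun k => if k = 0 then 1 else if k = 4 then -Complex.I else 0

/-- The 'quark' directions `e^i - i e^{i+4}`, `i = 1,2,3`. -/
def vQ (i : Fin 3) : Fin 8 → ℂ :=
  fun k => if (k : ℕ) = (i : ℕ) + 1 then 1 else if (k : ℕ) = (i : ℕ) + 5 then -Complex.I else 0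
@[simp] lemma oI00 : octIdx 0 0 = 0 := rfl
@[simp] lemma oS00 : octSgn 0 0 = 1 := rfl
@[simp] lemma oI01 : octIdx 0 1 = 1 := rfl
@[simp] lemma oS01 : octSgn 0 1 = 1 := rfl
@[simp] lemma oI02 : octIdx 0 2 = 2 := rfl
@[simp] lemma oS02 : octSgn 0 2 = 1 := rfl
@[simp] lemma oI03 : octIdx 0 3 = 3 := rfl
@[simp] lemma oS03 : octSgn 0 3 = 1 := rfl
@[simp] lemma oI04 : octIdx 0 4 = 4 := rfl
@[simp] lemma oS04 : octSgn 0 4 = 1 := rfl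
@[simp] lemma oI05 : octIdx 0 5 = 5 := rfl
@[simp] lemma oS05 : octSgn 0 5 = 1 := rfl
@[simp] lemma oI06 : octIdx 0 6 = 6 := rfl
@[simp] lemma oS06 : octSgn 0 6 = 1 := rfl
@[simp] lemma oI07 : octIdx 0 7 = 7 := rfl
@[simp] lemma oS07 : octSgn 0 7 = 1 := rfl
@[simp] lemma oI10 : octIdx 1 0 = 1 := rfl
@[simp] lemma oS10 : octSgn 1 0 = 1 := rfl
@[simp] lemma oI11 : octIdx 1 1 = 0 := rfl
@[simp] lemma oS11 : octSgn 1 1 = -1 := rfl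
@[simp] lemma oI12 : octIdx 1 2 = 7 := rfl
@[simp] lemma oS12 : octSgn 1 2 = -1 := rfl
@[simp] lemma oI13 : octIdx 1 3 = 6 := rfl
@[simp] lemma oS13 : octSgn 1 3 = 1 := rfl
@[simp] lemma oI14 : octIdx 1 4 = 5 := rfl
@[simp] lemma oS14 : octSgn 1 4 = -1 := rfl
@[simp] lemma oI15 : octIdx 1 5 = 4 := rfl
@[simp] lemma oS15 : octSgn 1 5 = 1 := rfl
@[simp] lemma oI16 : octIdx 1 6 = 3 := rfl
@[simp] lemma oS16 : octSgn 1 6 = -1 := rfl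
@[simp] lemma oI17 : octIdx 1 7 = 2 := rfl
@[simp] lemma oS17 : octSgn 1 7 = 1 := rfl
@[simp] lemma oI20 : octIdx 2 0 = 2 := rfl
@[simp] lemma oS20 : octSgn 2 0 = 1 := rfl
@[simp] lemma oI21 : octIdx 2 1 = 7 := rfl
@[simp] lemma oS21 : octSgn 2 1 = 1 := rfl
@[simp] lemma oI22 : octIdx 2 2 = 0 := rfl
@[simp] lemma oS22 : octSgn 2 2 = -1 := rfl
@[simp] lemma oI23 : octIdx 2 3 = 5 := rfl
@[simp] lemma oS23 : octSgn 2 3 = -1 := rfl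
@[simp] lemma oI24 : octIdx 2 4 = 6 := rfl
@[simp] lemma oS24 : octSgn 2 4 = -1 := rfl
@[simp] lemma oI25 : octIdx 2 5 = 3 := rfl
@[simp] lemma oS25 : octSgn 2 5 = 1 := rfl
@[simp] lemma oI26 : octIdx 2 6 = 4 := rfl
@[simp] lemma oS26 : octSgn 2 6 = 1 := rfl
@[simp] lemma oI27 : octIdx 2 7 = 1 := rfl
@[simp] lemma oS27 : octSgn 2 7 = -1 := rfl
@[simp] lemma oI30 : octIdx 3 0 = 3 := rfl
@[simp] lemma oS30 : octSgn 3 0 = 1 := rfl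
@[simp] lemma oI31 : octIdx 3 1 = 6 := rfl
@[simp] lemma oS31 : octSgn 3 1 = -1 := rfl
@[simp] lemma oI32 : octIdx 3 2 = 5 := rfl
@[simp] lemma oS32 : octSgn 3 2 = 1 := rfl
@[simp] lemma oI33 : octIdx 3 3 = 0 := rfl
@[simp] lemma oS33 : octSgn 3 3 = -1 := rfl
@[simp] lemma oI34 : octIdx 3 4 = 7 := rfl
@[simp] lemma oS34 : octSgn 3 4 = -1 := rfl
@[simp] lemma oI35 : octIdx 3 5 = 2 := rfl
@[simp] lemma oS35 : octSgn 3 5 = -1 := rfl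
@[simp] lemma oI36 : octIdx 3 6 = 1 := rfl
@[simp] lemma oS36 : octSgn 3 6 = 1 := rfl
@[simp] lemma oI37 : octIdx 3 7 = 4 := rfl
@[simp] lemma oS37 : octSgn 3 7 = 1 := rfl
@[simp] lemma oI40 : octIdx 4 0 = 4 := rfl
@[simp] lemma oS40 : octSgn 4 0 = 1 := rfl
@[simp] lemma oI41 : octIdx 4 1 = 5 := rfl
@[simp] lemma oS41 : octSgn 4 1 = 1 := rfl
@[simp] lemma oI42 : octIdx 4 2 = 6 := rfl
@[simp] lemma oS42 : octSgn 4 2 = 1 := rfl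
@[simp] lemma oI43 : octIdx 4 3 = 7 := rfl
@[simp] lemma oS43 : octSgn 4 3 = 1 := rfl
@[simp] lemma oI44 : octIdx 4 4 = 0 := rfl
@[simp] lemma oS44 : octSgn 4 4 = -1 := rfl
@[simp] lemma oI45 : octIdx 4 5 = 1 := rfl
@[simp] lemma oS45 : octSgn 4 5 = -1 := rfl
@[simp] lemma oI46 : octIdx 4 6 = 2 := rfl
@[simp] lemma oS46 : octSgn 4 6 = -1 := rfl
@[simp] lemma oI47 : octIdx 4 7 = 3 := rfl
@[simp] lemma oS47 : octSgn 4 7 = -1 := rfl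
@[simp] lemma oI50 : octIdx 5 0 = 5 := rfl
@[simp] lemma oS50 : octSgn 5 0 = 1 := rfl
@[simp] lemma oI51 : octIdx 5 1 = 4 := rfl
@[simp] lemma oS51 : octSgn 5 1 = -1 := rfl
@[simp] lemma oI52 : octIdx 5 2 = 3 := rfl
@[simp] lemma oS52 : octSgn 5 2 = -1 := rfl
@[simp] lemma oI53 : octIdx 5 3 = 2 := rfl
@[simp] lemma oS53 : octSgn 5 3 = 1 := rfl
@[simp] lemma oI54 : octIdx 5 4 = 1 := rfl
@[simp] lemma oS54 : octSgn 5 4 = 1 := rfl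
@[simp] lemma oI55 : octIdx 5 5 = 0 := rfl
@[simp] lemma oS55 : octSgn 5 5 = -1 := rfl
@[simp] lemma oI56 : octIdx 5 6 = 7 := rfl
@[simp] lemma oS56 : octSgn 5 6 = 1 := rfl
@[simp] lemma oI57 : octIdx 5 7 = 6 := rfl
@[simp] lemma oS57 : octSgn 5 7 = -1 := rfl
@[simp] lemma oI60 : octIdx 6 0 = 6 := rfl
@[simp] lemma oS60 : octSgn 6 0 = 1 := rfl
@[simp] lemma oI61 : octIdx 6 1 = 3 := rfl
@[simp] lemma oS61 : octSgn 6 1 = 1 := rfl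
@[simp] lemma oI62 : octIdx 6 2 = 4 := rfl
@[simp] lemma oS62 : octSgn 6 2 = -1 := rfl
@[simp] lemma oI63 : octIdx 6 3 = 1 := rfl
@[simp] lemma oS63 : octSgn 6 3 = -1 := rfl
@[simp] lemma oI64 : octIdx 6 4 = 2 := rfl
@[simp] lemma oS64 : octSgn 6 4 = 1 := rfl
@[simp] lemma oI65 : octIdx 6 5 = 7 := rfl
@[simp] lemma oS65 : octSgn 6 5 = -1 := rfl
@[simp] lemma oI66 : octIdx 6 6 = 0 := rfl
@[simp] lemma oS66 : octSgn 6 6 = -1 := rfl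
@[simp] lemma oI67 : octIdx 6 7 = 5 := rfl
@[simp] lemma oS67 : octSgn 6 7 = 1 := rfl
@[simp] lemma oI70 : octIdx 7 0 = 7 := rfl
@[simp] lemma oS70 : octSgn 7 0 = 1 := rfl
@[simp] lemma oI71 : octIdx 7 1 = 2 := rfl
@[simp] lemma oS71 : octSgn 7 1 = -1 := rfl
@[simp] lemma oI72 : octIdx 7 2 = 1 := rfl
@[simp] lemma oS72 : octSgn 7 2 = 1 := rfl
@[simp] lemma oI73 : octIdx 7 3 = 4 := rfl
@[simp] lemma oS73 : octSgn 7 3 = -1 := rfl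
@[simp] lemma oI74 : octIdx 7 4 = 3 := rfl
@[simp] lemma oS74 : octSgn 7 4 = 1 := rfl
@[simp] lemma oI75 : octIdx 7 5 = 6 := rfl
@[simp] lemma oS75 : octSgn 7 5 = 1 := rfl
@[simp] lemma oI76 : octIdx 7 6 = 5 := rfl
@[simp] lemma oS76 : octSgn 7 6 = -1 := rfl
@[simp] lemma oI77 : octIdx 7 7 = 0 := rfl
@[simp] lemma oS77 : octSgn 7 7 = -1 := rfl
@[simp] lemma fs0 : Fin.succ (0 : Fin 7) = (1 : Fin 8) := rfl
@[simp] lemma fs1 : Fin.succ (1 : Fin 7) = (2 : Fin 8) := rfl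
@[simp] lemma fs2 : Fin.succ (2 : Fin 7) = (3 : Fin 8) := rfl
@[simp] lemma fs3 : Fin.succ (3 : Fin 7) = (4 : Fin 8) := rfl
@[simp] lemma fs4 : Fin.succ (4 : Fin 7) = (5 : Fin 8) := rfl
@[simp] lemma fs5 : Fin.succ (5 : Fin 7) = (6 : Fin 8) := rfl
@[simp] lemma fs6 : Fin.succ (6 : Fin 7) = (7 : Fin 8) := rfl

lemma forall_fin8 {P : Fin 8 → Prop} :
    (∀ i, P i) ↔ P 0 ∧ P 1 ∧ P 2 ∧ P 3 ∧ P 4 ∧ P 5 ∧ P 6 ∧ P 7 := by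
  constructor
  · intro h; exact ⟨h 0, h 1, h 2, h 3, h 4, h 5, h 6, h 7⟩
  · rintro ⟨h0,h1,h2,h3,h4,h5,h6,h7⟩ i
    fin_cases i <;> assumption

lemma Eo_apply' (k : Fin 7) (r c : Fin 8) :
    Eo k r c = if r = octIdx k.succ c then octSgn k.succ c else 0 := by
  show (∑ i, if r = octIdx i c then octSgn i c * eo k i else 0) = _
  rw [Finset.sum_eq_single k.succ]
  · simp [eo]
  · intro b _ hb
    simp [eo, Pi.single_apply, hb]
  · simp

lemma Ro_e4_apply (r c : Fin 8) :
    Ro (eo 3) r c = if r = octIdx c 4 then octSgn c 4 else 0 := by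
  show (∑ j, if r = octIdx c j then octSgn c j * eo 3 j else 0) = _
  rw [Finset.sum_eq_single (4 : Fin 8)]
  · simp [eo, Pi.single_apply]
  · intro b _ hb
    simp [eo, Pi.single_apply, hb]
  · simp

lemma mulE_apply (A : Matrix (Fin 8) (Fin 8) ℝ) (k : Fin 7) (i j : Fin 8) :
    (A * Eo k) i j = A i (octIdx k.succ j) * octSgn k.succ j := by
  rw [Matrix.mul_apply, Finset.sum_eq_single (octIdx k.succ j)]
  · rw [Eo_apply', if_pos rfl]
  · intro b _ hb
    rw [Eo_apply', if_neg hb, mul_zero]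
  · simp

lemma E4mul_apply (A : Matrix (Fin 8) (Fin 8) ℝ) (i j : Fin 8) :
    (Eo 3 * A) i j = octSgn 4 (octIdx 4 i) * A (octIdx 4 i) j := by
  have key : ∀ a b : Fin 8, (a = octIdx 4 b) ↔ (b = octIdx 4 a) := by decide
  rw [Matrix.mul_apply, Finset.sum_eq_single (octIdx 4 i)]
  · simp only [Eo_apply', fs3]
    rw [if_pos ((key i _).mpr rfl)]
  · intro b _ hb
    simp only [Eo_apply', fs3]
    rw [if_neg (fun h => hb ((key i b).mp h)), zero_mul]
  · simp

lemma mulR_apply (A : Matrix (Fin 8) (Fin 8) ℝ) (i j : Fin 8) :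
    (A * Ro (eo 3)) i j = A i (octIdx j 4) * octSgn j 4 := by
  rw [Matrix.mul_apply, Finset.sum_eq_single (octIdx j 4)]
  · rw [Ro_e4_apply, if_pos rfl]
  · intro b _ hb
    rw [Ro_e4_apply, if_neg hb, mul_zero]
  · simp

lemma R4mul_apply (A : Matrix (Fin 8) (Fin 8) ℝ) (i j : Fin 8) :
    (Ro (eo 3) * A) i j = octSgn (octIdx i 4) 4 * A (octIdx i 4) j := by
  have key : ∀ a b : Fin 8, (a = octIdx b 4) ↔ (b = octIdx a 4) := by decide
  rw [Matrix.mul_apply, Finset.sum_eq_single (octIdx i 4)]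
  · rw [Ro_e4_apply, if_pos ((key i _).mpr rfl)]
  · intro b _ hb
    rw [Ro_e4_apply, if_neg (fun h => hb ((key i b).mp h)), zero_mul]
  · simp

lemma Kop_apply (i j : Fin 8) :
    Kop i j
      = (if i = octIdx 1 (octIdx 5 j) then octSgn 1 (octIdx 5 j) else 0) * octSgn 5 j
      + (if i = octIdx 2 (octIdx 6 j) then octSgn 2 (octIdx 6 j) else 0) * octSgn 6 j
      + (if i = octIdx 3 (octIdx 7 j) then octSgn 3 (octIdx 7 j) else 0) * octSgn 7 j := by
  show (Eo 0 * Eo 4 + Eo 1 * Eo 5 + Eo 2 * Eo 6) i j = _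
  rw [Matrix.add_apply, Matrix.add_apply, mulE_apply, mulE_apply, mulE_apply,
    Eo_apply', Eo_apply', Eo_apply']
  norm_num

set_option maxHeartbeats 2000000 in
/-- `E¹E⁵+E²E⁶+E³E⁷` commutes with `J = E⁴` and with `J' = R_{e⁴}`; on the
(1,0)-eigenspace of `J` it has eigenvalue `3i` on the lepton direction and `-i` on each
quark direction; equivalently `⟨x,(E¹E⁵+E²E⁶+E³E⁷)E⁴x⟩ = -3L̄L + Q̄ⁱQⁱ`. -/
theorem lepton_quark_operator :
    Kop * Eo 3 = Eo 3 * Kop ∧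
    Kop * Ro (eo 3) = Ro (eo 3) * Kop ∧
    (Kop.map (Complex.ofReal)).mulVec vL = (3 * Complex.I) • vL ∧
    (∀ i : Fin 3, (Kop.map (Complex.ofReal)).mulVec (vQ i) = (-Complex.I) • vQ i) ∧
    (∀ x : Fin 8 → ℝ, x ⬝ᵥ (Kop * Eo 3).mulVec x
      = -3 * (x 0 ^ 2 + x 4 ^ 2)
        + ((x 1 ^ 2 + x 5 ^ 2) + (x 2 ^ 2 + x 6 ^ 2) + (x 3 ^ 2 + x 7 ^ 2))) := by
  refine ⟨?_, ?_, ?_, ?_, ?_⟩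
  · refine Matrix.ext ?_
    simp only [forall_fin8]
    norm_num (config := { decide := true }) [mulE_apply, E4mul_apply, Kop_apply]
  · refine Matrix.ext ?_
    simp only [forall_fin8]
    norm_num (config := { decide := true }) [mulR_apply, R4mul_apply, Kop_apply]
  · refine funext ?_
    simp only [forall_fin8]
    norm_num (config := { decide := true }) [Matrix.mulVec, dotProduct,
      Fin.sum_univ_eight, Matrix.map_apply, Kop_apply, vL, Pi.smul_apply, smul_eq_mul]
    ring_nf
    norm_num [Complex.I_sq]
  · intro i
    fin_cases i <;>
      · refine funext ?_
        simp only [forall_fin8]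
        norm_num (config := { decide := true }) [Matrix.mulVec, dotProduct,
          Fin.sum_univ_eight, Matrix.map_apply, Kop_apply, vQ, Pi.smul_apply, smul_eq_mul]
  · intro x
    simp only [dotProduct, Matrix.mulVec, Fin.sum_univ_eight, mulE_apply, Kop_apply, fs3]
    norm_num (config := { decide := true })
    ring
end
end
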